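/- Suppose G satisfies the doubled crystal axioms. If a vertex w of G has ε̂_i(w) = φ'_i(w) = φ̂_{i+1}(w) = ε'_{i+1}(w) = 0, then w has no incident edges labeled i, i', i+1, or (i+1)'. (Excluded lengths lemma.) -/

import Mathlib

/-- A "doubled crystal": a finite directed graph with vertices weighted by
`ℤ_{≥0}^n` and edges labeled `1', 1, …, (n-1)', n-1`, satisfying the axioms
(B1)–(B3), (K), (A1)–(A8) and the dual axioms (A1*)–(A8*) of
Gillespie–Levinson's "Axioms for shifted tableau crystals".

`F i false` is the unprimed lowering operator `f_i`, `F i true` is the primed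
lowering operator `f_i'`; similarly for the raising operators `E`.  The
statistics `eps, phi` are the total distances to the top and bottom of the
`{i,i'}`-string; `epsP, phiP` count only primed edges and `epsH, phiH`
count only unprimed edges. -/
structure DoubledCrystal (n : ℕ) where
  B : Type
  fintype : Fintype B
  F : Fin (n - 1) → Bool → B → Option B
  E : Fin (n - 1) → Bool → B → Option B
  wt : B → Fin n → ℕ
  eps : Fin (n - 1) → B → ℕ
  phi : Fin (n - 1) → B → ℕ
  epsP : Fin (n - 1) → B → ℕ
  phiP : Fin (n - 1) → B → ℕ
  epsH : Fin (n - 1) → B → ℕ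
  phiH : Fin (n - 1) → B → ℕ
  /-- `e_i, f_i` (and `e_i', f_i'`) are partial inverses. -/
  inverse : ∀ (i : Fin (n - 1)) (p : Bool) (x y : B),
    F i p x = some y ↔ E i p y = some x
  /-- (K1): effect of a raising operator on the weight. -/
  K1wt : ∀ (i : Fin (n - 1)) (p : Bool) (x y : B), E i p x = some y →
    ∀ j : Fin n, (wt y j : ℤ) = (wt x j : ℤ) +
      (if (j : ℕ) = (i : ℕ) then 1 else if (j : ℕ) = (i : ℕ) + 1 then -1 else 0)
  /-- (K1): effect of a raising operator on the statistics `ε_i, φ_i`. -/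
  K1len : ∀ (i : Fin (n - 1)) (p : Bool) (x y : B), E i p x = some y →
    eps i y + 1 = eps i x ∧ phi i y = phi i x + 1
  /-- (K2): `φ_i(x) - ε_i(x) = wt_i(x) - wt_{i+1}(x)`. -/
  K2 : ∀ (i : Fin (n - 1)) (x : B),
    (phi i x : ℤ) - (eps i x : ℤ) =
      (wt x ⟨(i : ℕ), by have := i.isLt; omega⟩ : ℤ) -
      (wt x ⟨(i : ℕ) + 1, by have := i.isLt; omega⟩ : ℤ)
  /-- The unprimed/primed lowering operators are defined iff `φ̂_i`/`φ'_i` is positive. -/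
  F_none : ∀ (i : Fin (n - 1)) (x : B),
    (F i false x = none ↔ phiH i x = 0) ∧ (F i true x = none ↔ phiP i x = 0)
  /-- The unprimed/primed raising operators are defined iff `ε̂_i`/`ε'_i` is positive. -/
  E_none : ∀ (i : Fin (n - 1)) (x : B),
    (E i false x = none ↔ epsH i x = 0) ∧ (E i true x = none ↔ epsP i x = 0)
  /-- Along an unprimed `i`-edge, the unprimed statistics shift by one. -/
  Fstep : ∀ (i : Fin (n - 1)) (x y : B), F i false x = some y →
    epsH i y = epsH i x + 1 ∧ phiH i x = phiH i y + 1
  /-- Along a primed `i`-edge, the primed statistics shift by one. -/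
  FstepP : ∀ (i : Fin (n - 1)) (x y : B), F i true x = some y →
    epsP i y = epsP i x + 1 ∧ phiP i x = phiP i y + 1
  /-- Along a strictly unprimed `i`-edge (separated string), the primed statistics
  do not change. -/
  Fsep : ∀ (i : Fin (n - 1)) (x y : B), F i false x = some y → F i true x ≠ some y →
    epsP i y = epsP i x ∧ phiP i y = phiP i x
  /-- Along a strictly primed `i`-edge (separated string), the unprimed statistics
  do not change. -/
  FsepP : ∀ (i : Fin (n - 1)) (x y : B), F i true x = some y → F i false x ≠ some y →
    epsH i y = epsH i x ∧ phiH i y = phiH i x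
  /-- (B1): every vertex lies either on a collapsed `{i,i'}`-string (all edges both
  primed and unprimed, all statistics equal, with top/bottom characterized by
  the vanishing of `wt_{i+1}`/`wt_i`), or on a separated string (total statistics
  split into primed and unprimed parts, with exactly one primed edge between
  the top and the bottom). -/
  B1 : ∀ (i : Fin (n - 1)) (v : B),
    (F i false v = F i true v ∧ E i false v = E i true v ∧
      epsP i v = eps i v ∧ epsH i v = eps i v ∧
      phiP i v = phi i v ∧ phiH i v = phi i v ∧
      (eps i v = 0 ↔ wt v ⟨(i : ℕ) + 1, by have := i.isLt; omega⟩ = 0) ∧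
      (phi i v = 0 ↔ wt v ⟨(i : ℕ), by have := i.isLt; omega⟩ = 0)) ∨
    (eps i v = epsP i v + epsH i v ∧ phi i v = phiP i v + phiH i v ∧
      epsP i v + phiP i v = 1)
  /-- (B1): if `wt_{i+1}(v) = 0` then `v` is the top of a collapsed `{i,i'}`-string. -/
  B1top : ∀ (i : Fin (n - 1)) (v : B),
    wt v ⟨(i : ℕ) + 1, by have := i.isLt; omega⟩ = 0 →
      eps i v = 0 ∧ F i false v = F i true v
  /-- (B1): if `wt_i(v) = 0` then `v` is the bottom of a collapsed `{i,i'}`-string. -/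
  B1bot : ∀ (i : Fin (n - 1)) (v : B),
    wt v ⟨(i : ℕ), by have := i.isLt; omega⟩ = 0 →
      phi i v = 0 ∧ E i false v = E i true v
  /-- (B2): distant edges commute (lowering). -/
  B2f : ∀ (i j : Fin (n - 1)) (p q : Bool) (w x y : B),
    ((i : ℕ) + 1 < (j : ℕ) ∨ (j : ℕ) + 1 < (i : ℕ)) →
    F i p w = some x → F j q w = some y →
    ∃ z, F j q x = some z ∧ F i p y = some z
  /-- (B2): distant edges commute (raising). -/
  B2e : ∀ (i j : Fin (n - 1)) (p q : Bool) (w x y : B),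
    ((i : ℕ) + 1 < (j : ℕ) ∨ (j : ℕ) + 1 < (i : ℕ)) →
    E i p w = some x → E j q w = some y →
    ∃ z, E j q x = some z ∧ E i p y = some z
  /-- (B3): the lengths axiom for an `(i±1)`- or `(i±1)'`-edge `z → w`. -/
  B3 : ∀ (i j : Fin (n - 1)) (p : Bool) (z w : B),
    ((i : ℕ) = (j : ℕ) + 1 ∨ (j : ℕ) = (i : ℕ) + 1) →
    F j p z = some w →
    (eps i w = eps i z ∧ phi i w = phi i z + 1) ∨
    (eps i w + 1 = eps i z ∧ phi i w = phi i z)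
  /-- (A1) Primed square. -/
  A1 : ∀ (i j : Fin (n - 1)) (w x y : B), (i : ℕ) + 1 = (j : ℕ) →
    F i true w = some x → F j true w = some y →
    ∃ z, F j true x = some z ∧ F i true y = some z
  /-- (A2) Half-solid square. -/
  A2 : ∀ (i j : Fin (n - 1)) (w x y : B), (i : ℕ) + 1 = (j : ℕ) →
    F i true w = some x → F j true w = some y →
    (((∃ z, F j false x = some z ∧ F i false y = some z) ∧
        F i true y ≠ F i false y) ↔
      (eps i w = eps i y ∧ eps j w = eps j x ∧ phi j w = 1 ∧ phiH j w = 0))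
  /-- (A3) Square for `{f_i', f_{i+1}}`. -/
  A3 : ∀ (i j : Fin (n - 1)) (w x y : B), (i : ℕ) + 1 = (j : ℕ) →
    F i true w = some x → F j false w = some y →
    (F j true w ≠ some y ∨ F i false w ≠ some x) →
    ∃ z, F j false x = some z ∧ F i true y = some z
  /-- (A4) Square for `{f_i, f_{i+1}'}`. -/
  A4 : ∀ (i j : Fin (n - 1)) (w x y : B), (i : ℕ) + 1 = (j : ℕ) →
    F i false w = some x → F j true w = some y →
    ((∃ z, F j true x = some z ∧ F i false y = some z) ↔ 0 < epsH i w)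
  /-- (A5) Half-primed square. -/
  A5 : ∀ (i j : Fin (n - 1)) (w x y : B), (i : ℕ) + 1 = (j : ℕ) →
    F i false w = some x → F j false w = some y → F i true w = none →
    ((∃ z, F j true x = some z ∧ F i true y = some z) ↔
      (eps i w = eps i y + 1 ∧ eps j w = eps j x + 1))
  /-- (A6) Square. -/
  A6 : ∀ (i j : Fin (n - 1)) (w x y : B), (i : ℕ) + 1 = (j : ℕ) →
    F i false w = some x → F j false w = some y → F i true w = none →
    ((∃ z, F j false x = some z ∧ F i false y = some z) ↔
      ((eps i w = eps i y + 1 ∧ eps j w = eps j x) ∨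
       (eps i w = eps i y ∧ eps j w = eps j x + 1)))
  /-- (A7) Half-primed octagon. -/
  A7 : ∀ (i j : Fin (n - 1)) (w x y : B), (i : ℕ) + 1 = (j : ℕ) →
    F i false w = some x → F j false w = some y → F i true w = none →
    (((∃ z, ((F i false y).bind (F i true)).bind (F j false) = some z ∧
            ((F j false x).bind (F j false)).bind (F i true) = some z) ∧
        F j false x ≠ F i false y) ↔
      (eps i w = eps i y ∧ eps j w = eps j x ∧ epsH i w + 1 = epsH i y))
  /-- (A8) Octagon. -/
  A8 : ∀ (i j : Fin (n - 1)) (w x y : B), (i : ℕ) + 1 = (j : ℕ) →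
    F i false w = some x → F j false w = some y → F i true w = none →
    (((∃ z, ((F i false y).bind (F i false)).bind (F j false) = some z ∧
            ((F j false x).bind (F j false)).bind (F i false) = some z) ∧
        F j false x ≠ F i false y) ↔
      (eps i w = eps i y ∧ eps j w = eps j x ∧ 2 ≤ phiH i y))
  /-- (A1*) Dual primed square. -/
  A1d : ∀ (i j : Fin (n - 1)) (w x y : B), (i : ℕ) + 1 = (j : ℕ) →
    E j true w = some x → E i true w = some y →
    ∃ z, E i true x = some z ∧ E j true y = some z
  /-- (A2*) Dual half-solid square. -/
  A2d : ∀ (i j : Fin (n - 1)) (w x y : B), (i : ℕ) + 1 = (j : ℕ) →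
    E j true w = some x → E i true w = some y →
    (((∃ z, E j false y = some z ∧ E i false x = some z) ∧
        E j true y ≠ E j false y) ↔
      (phi j w = phi j y ∧ phi i w = phi i x ∧ eps i w = 1 ∧ epsH i w = 0))
  /-- (A3*) Dual square for `{e_{i+1}', e_i}`. -/
  A3d : ∀ (i j : Fin (n - 1)) (w x y : B), (i : ℕ) + 1 = (j : ℕ) →
    E j true w = some x → E i false w = some y →
    (E i true w ≠ some y ∨ E j false w ≠ some x) →
    ∃ z, E i false x = some z ∧ E j true y = some z
  /-- (A4*) Dual square for `{e_{i+1}, e_i'}`. -/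
  A4d : ∀ (i j : Fin (n - 1)) (w x y : B), (i : ℕ) + 1 = (j : ℕ) →
    E j false w = some x → E i true w = some y →
    ((∃ z, E i true x = some z ∧ E j false y = some z) ↔ 0 < phiH j w)
  /-- (A5*) Dual half-primed square. -/
  A5d : ∀ (i j : Fin (n - 1)) (w x y : B), (i : ℕ) + 1 = (j : ℕ) →
    E j false w = some x → E i false w = some y → E j true w = none →
    ((∃ z, E j true y = some z ∧ E i true x = some z) ↔
      (phi j w = phi j y + 1 ∧ phi i w = phi i x + 1))
  /-- (A6*) Dual square. -/
  A6d : ∀ (i j : Fin (n - 1)) (w x y : B), (i : ℕ) + 1 = (j : ℕ) →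
    E j false w = some x → E i false w = some y → E j true w = none →
    ((∃ z, E j false y = some z ∧ E i false x = some z) ↔
      ((phi j w = phi j y + 1 ∧ phi i w = phi i x) ∨
       (phi j w = phi j y ∧ phi i w = phi i x + 1)))
  /-- (A7*) Dual half-primed octagon. -/
  A7d : ∀ (i j : Fin (n - 1)) (w x y : B), (i : ℕ) + 1 = (j : ℕ) →
    E j false w = some x → E i false w = some y → E j true w = none →
    (((∃ z, ((E j false y).bind (E j true)).bind (E i false) = some z ∧
            ((E i false x).bind (E i false)).bind (E j true) = some z) ∧
        E j false y ≠ E i false x) ↔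
      (phi j w = phi j y ∧ phi i w = phi i x ∧ phiH j w + 1 = phiH j y))
  /-- (A8*) Dual octagon. -/
  A8d : ∀ (i j : Fin (n - 1)) (w x y : B), (i : ℕ) + 1 = (j : ℕ) →
    E j false w = some x → E i false w = some y → E j true w = none →
    (((∃ z, ((E j false y).bind (E j false)).bind (E i false) = some z ∧
            ((E i false x).bind (E i false)).bind (E j false) = some z) ∧
        E j false y ≠ E i false x) ↔
      (phi j w = phi j y ∧ phi i w = phi i x ∧ 2 ≤ epsH j y))

namespace DoubledCrystal

variable {n : ℕ}

/-- One step along an `{i,i'}`-edge. -/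
def stringStep (C : DoubledCrystal n) (i : Fin (n - 1)) (x y : C.B) : Prop :=
  ∃ p, C.F i p x = some y

/-- `u` lies on the `{i,i'}`-string through `v`. -/
def SameString (C : DoubledCrystal n) (i : Fin (n - 1)) (v u : C.B) : Prop :=
  Relation.EqvGen (C.stringStep i) v u

/-- The `{i,i'}`-string through `v` is collapsed: every unprimed edge on it
coincides with the corresponding primed edge. -/
def Collapsed (C : DoubledCrystal n) (i : Fin (n - 1)) (v : C.B) : Prop :=
  ∀ u, C.SameString i v u → C.F i false u = C.F i true u

/-- One step along any edge of the graph. -/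
def step (C : DoubledCrystal n) (x y : C.B) : Prop :=
  ∃ i p, C.F i p x = some y

end DoubledCrystal


private lemma DoubledCrystal.qchain {n : ℕ} (C : DoubledCrystal n) (i : Fin (n - 1))
    (hi : (i : ℕ) < n) :
    ∀ (k : ℕ) (prev v : C.B), C.F i false prev = some v → C.phiP i prev = 0 →
      C.phiP i v = 0 → C.phiH i v = k → C.wt v ⟨(i : ℕ), hi⟩ = k → False := by
  intro k
  induction k with
  | zero =>
    intro prev v hedge hprevP hvP hphiH hwt
    have hbot := C.B1bot i v hwt
    have hEf : C.E i false v = some prev := (C.inverse i false prev v).mp hedge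
    have hEt : C.E i true v = some prev := by rw [← hbot.2]; exact hEf
    have hFt : C.F i true prev = some v := (C.inverse i true prev v).mpr hEt
    have : C.F i true prev = none := (C.F_none i prev).2.mpr hprevP
    rw [this] at hFt
    exact nomatch hFt
  | succ k ih =>
    intro prev v hedge hprevP hvP hphiH hwt
    have hne : C.F i false v ≠ none := by
      intro hc
      have := (C.F_none i v).1.mp hc
      omega
    obtain ⟨v', hv'⟩ := Option.ne_none_iff_exists'.mp hne
    have hstrict : C.F i true v ≠ some v' := by
      have : C.F i true v = none := (C.F_none i v).2.mpr hvP
      rw [this]; exact fun h => nomatch h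
    obtain ⟨hsep1, hsep2⟩ := C.Fsep i v v' hv' hstrict
    obtain ⟨hst1, hst2⟩ := C.Fstep i v v' hv'
    have hwt' := C.K1wt i false v' v ((C.inverse i false v v').mp hv') ⟨(i : ℕ), hi⟩
    rw [if_pos rfl] at hwt'
    exact ih v v' hv' hvP (by omega) (by omega) (by omega)

private lemma DoubledCrystal.colwt {n : ℕ} (C : DoubledCrystal n) (i : Fin (n - 1))
    (hi1 : (i : ℕ) + 1 < n) :
    ∀ (e : ℕ) (v : C.B),
      C.E i false v = C.E i true v →
      C.epsP i v = C.eps i v → C.epsH i v = C.eps i v →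
      C.phiP i v = C.phi i v → C.phiH i v = C.phi i v →
      (C.eps i v = 0 ↔ C.wt v ⟨(i : ℕ) + 1, hi1⟩ = 0) →
      C.eps i v = e → 1 ≤ C.phi i v → C.wt v ⟨(i : ℕ) + 1, hi1⟩ = e := by
  intro e
  induction e with
  | zero =>
    intro v _ _ _ _ _ hiff he _
    exact hiff.mp he
  | succ e ih =>
    intro v hEE h3 h4 h5 h6 hiff he hphi
    have hne : C.E i true v ≠ none := by
      intro hc
      have := (C.E_none i v).2.mp hc
      omega
    obtain ⟨ξ, hξ⟩ := Option.ne_none_iff_exists'.mp hne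
    have hξf : C.E i false v = some ξ := by rw [hEE]; exact hξ
    have hFt : C.F i true ξ = some v := (C.inverse i true ξ v).mpr hξ
    have hFf : C.F i false ξ = some v := (C.inverse i false ξ v).mpr hξf
    obtain ⟨hk1, hk2⟩ := C.K1len i true v ξ hξ
    obtain ⟨hp1, hp2⟩ := C.FstepP i ξ v hFt
    obtain ⟨hh1, hh2⟩ := C.Fstep i ξ v hFf
    rcases C.B1 i ξ with ⟨c1, c2, c3, c4, c5, c6, c7, c8⟩ | ⟨s1, s2, s3⟩
    · have hrec := ih ξ c2 c3 c4 c5 c6 c7 (by omega) (by omega)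
      have hwt' := C.K1wt i true v ξ hξ ⟨(i : ℕ) + 1, hi1⟩
      rw [if_neg (show ¬((i : ℕ) + 1 = (i : ℕ)) by omega),
        if_pos (show (i : ℕ) + 1 = (i : ℕ) + 1 from rfl)] at hwt'
      omega
    · omega

/-- **Excluded lengths lemma.**  In a doubled crystal, if a vertex `w` has
`ε̂_i(w) = φ'_i(w) = φ̂_{i+1}(w) = ε'_{i+1}(w) = 0`, then there are no
`i`-, `i'`-, `(i+1)`- or `(i+1)'`-edges incident to `w`. -/
theorem doubledCrystal_excluded_lengths {n : ℕ} (C : DoubledCrystal n)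
    (i j : Fin (n - 1)) (hij : (i : ℕ) + 1 = (j : ℕ)) (w : C.B)
    (h1 : C.epsH i w = 0) (h2 : C.phiP i w = 0)
    (h3 : C.phiH j w = 0) (h4 : C.epsP j w = 0) :
    (∀ p : Bool, C.F i p w = none ∧ C.E i p w = none ∧
      C.F j p w = none ∧ C.E j p w = none) := by
  have hi : (i : ℕ) < n := by have := i.isLt; omega
  have hi1 : (i : ℕ) + 1 < n := by have := j.isLt; omega
  have hjn : (j : ℕ) < n := by have := j.isLt; omega
  have hj1 : (j : ℕ) + 1 < n := by have := j.isLt; omega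
  have hfin_ji : (⟨(j : ℕ), hjn⟩ : Fin n) = ⟨(i : ℕ) + 1, hi1⟩ := Fin.ext hij.symm
  suffices H : ∀ (N : ℕ) (w : C.B), C.eps j w = N → C.epsH i w = 0 → C.phiP i w = 0 →
      C.phiH j w = 0 → C.epsP j w = 0 →
      (∀ p : Bool, C.F i p w = none ∧ C.E i p w = none ∧
        C.F j p w = none ∧ C.E j p w = none) by
    exact H _ w rfl h1 h2 h3 h4
  clear h1 h2 h3 h4 w
  intro N
  induction N using Nat.strong_induction_on with
  | _ N IH =>
  intro w hN h1 h2 h3 h4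
  rcases C.B1 i w with ⟨ci1, ci2, ci3, ci4, ci5, ci6, ci7, ci8⟩ | ⟨si1, si2, si3⟩
  · rcases C.B1 j w with ⟨cj1, cj2, cj3, cj4, cj5, cj6, cj7, cj8⟩ | ⟨sj1, sj2, sj3⟩
    · -- both strings collapsed at w: all eight operators undefined
      have hFif : C.F i false w = none := (C.F_none i w).1.mpr (by omega)
      have hFit : C.F i true w = none := (C.F_none i w).2.mpr h2
      have hEif : C.E i false w = none := (C.E_none i w).1.mpr h1
      have hEit : C.E i true w = none := (C.E_none i w).2.mpr (by omega)
      have hFjf : C.F j false w = none := (C.F_none j w).1.mpr h3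
      have hFjt : C.F j true w = none := (C.F_none j w).2.mpr (by omega)
      have hEjf : C.E j false w = none := (C.E_none j w).1.mpr (by omega)
      have hEjt : C.E j true w = none := (C.E_none j w).2.mpr h4
      intro p
      cases p
      · exact ⟨hFif, hEif, hFjf, hEjf⟩
      · exact ⟨hFit, hEit, hFjt, hEjt⟩
    · -- collapsed at i, separated at j: impossible
      exfalso
      have hw0 : C.wt w ⟨(i : ℕ) + 1, hi1⟩ = 0 := ci7.mp (by omega)
      have hw0' : C.wt w ⟨(j : ℕ), hjn⟩ = 0 := by rw [hfin_ji]; exact hw0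
      obtain ⟨hb1, -⟩ := C.B1bot j w hw0'
      omega
  · rcases C.B1 j w with ⟨cj1, cj2, cj3, cj4, cj5, cj6, cj7, cj8⟩ | ⟨sj1, sj2, sj3⟩
    · -- separated at i, collapsed at j: impossible
      exfalso
      have hw0 : C.wt w ⟨(j : ℕ), hjn⟩ = 0 := cj8.mp (by omega)
      have hw0' : C.wt w ⟨(i : ℕ) + 1, hi1⟩ = 0 := by rw [← hfin_ji]; exact hw0
      obtain ⟨ht1, -⟩ := C.B1top i w hw0'
      omega
    · -- BOTH SEPARATED: derive a contradiction
      exfalso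
      have hePiw : C.epsP i w = 1 := by omega
      have heiw : C.eps i w = 1 := by omega
      have hpPjw : C.phiP j w = 1 := by omega
      have hpjw : C.phi j w = 1 := by omega
      have hq1 : 1 ≤ C.wt w ⟨(i : ℕ) + 1, hi1⟩ := by
        by_contra hcon
        have h0 : C.wt w ⟨(i : ℕ) + 1, hi1⟩ = 0 := by omega
        have := (C.B1top i w h0).1
        omega
      -- y = e_i'(w)
      have hyne : C.E i true w ≠ none := by
        intro hc; have := (C.E_none i w).2.mp hc; omega
      obtain ⟨y, hy⟩ := Option.ne_none_iff_exists'.mp hyne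
      have hyF : C.F i true y = some w := (C.inverse i true y w).mpr hy
      obtain ⟨hyk1, hyk2⟩ := C.K1len i true w y hy
      obtain ⟨hyp1, hyp2⟩ := C.FstepP i y w hyF
      have hystrict : C.F i false y ≠ some w := by
        intro hc
        have := (C.Fstep i y w hc).1
        omega
      obtain ⟨hys1, hys2⟩ := C.FsepP i y w hyF hystrict
      have hwty := C.K1wt i true w y hy
      have hwty_i : (C.wt y ⟨(i : ℕ), hi⟩ : ℤ) = C.wt w ⟨(i : ℕ), hi⟩ + 1 := by
        have := hwty ⟨(i : ℕ), hi⟩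
        rwa [if_pos (show (i : ℕ) = (i : ℕ) from rfl)] at this
      have hwty_i1 : (C.wt y ⟨(i : ℕ) + 1, hi1⟩ : ℤ) = C.wt w ⟨(i : ℕ) + 1, hi1⟩ - 1 := by
        have := hwty ⟨(i : ℕ) + 1, hi1⟩
        rwa [if_neg (show ¬((i : ℕ) + 1 = (i : ℕ)) by omega),
          if_pos (show (i : ℕ) + 1 = (i : ℕ) + 1 from rfl)] at this
      have hwty_j1 : (C.wt y ⟨(j : ℕ) + 1, hj1⟩ : ℤ) = C.wt w ⟨(j : ℕ) + 1, hj1⟩ := by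
        have := hwty ⟨(j : ℕ) + 1, hj1⟩
        rwa [if_neg (show ¬((j : ℕ) + 1 = (i : ℕ)) by omega),
          if_neg (show ¬((j : ℕ) + 1 = (i : ℕ) + 1) by omega), add_zero] at this
      have hK2i : ((C.phi i w : ℤ)) - (C.eps i w : ℤ) =
          (C.wt w ⟨(i : ℕ), hi⟩ : ℤ) - (C.wt w ⟨(i : ℕ) + 1, hi1⟩ : ℤ) := C.K2 i w
      have hK2j : ((C.phi j w : ℤ)) - (C.eps j w : ℤ) =
          (C.wt w ⟨(j : ℕ), hjn⟩ : ℤ) - (C.wt w ⟨(j : ℕ) + 1, hj1⟩ : ℤ) := C.K2 j w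
      have hK2j' : ((C.phi j w : ℤ)) - (C.eps j w : ℤ) =
          (C.wt w ⟨(i : ℕ) + 1, hi1⟩ : ℤ) - (C.wt w ⟨(j : ℕ) + 1, hj1⟩ : ℤ) := by
        rw [← hfin_ji]; exact hK2j
      -- the "q = 1" contradiction
      have hqcon : C.wt w ⟨(i : ℕ) + 1, hi1⟩ = 1 → False := by
        intro hq
        have hpw : C.wt w ⟨(i : ℕ), hi⟩ = C.phi i w := by omega
        rcases Nat.eq_zero_or_pos (C.phi i w) with hz | hpos
        · have hb := C.B1bot i w (by omega : C.wt w ⟨(i : ℕ), hi⟩ = 0)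
          have hEf : C.E i false w = none := (C.E_none i w).1.mpr h1
          rw [hb.2, hy] at hEf
          exact nomatch hEf
        · have hne : C.F i false w ≠ none := by
            intro hc; have := (C.F_none i w).1.mp hc; omega
          obtain ⟨v, hv⟩ := Option.ne_none_iff_exists'.mp hne
          have hstrw : C.F i true w ≠ some v := by
            rw [(C.F_none i w).2.mpr h2]; exact fun h => nomatch h
          obtain ⟨hsp1, hsp2⟩ := C.Fsep i w v hv hstrw
          obtain ⟨hsf1, hsf2⟩ := C.Fstep i w v hv
          have hwtv := C.K1wt i false v w ((C.inverse i false w v).mp hv) ⟨(i : ℕ), hi⟩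
          rw [if_pos (show (i : ℕ) = (i : ℕ) from rfl)] at hwtv
          exact C.qchain i hi (C.phiH i v) w v hv h2 (by omega) rfl (by omega)
      -- Step A : φ̂_{i+1}(y) = 0
      have hyPhiHj : C.phiH j y = 0 := by
        by_contra hne0
        have hnefy : C.F j false y ≠ none := by
          intro hc; exact hne0 ((C.F_none j y).1.mp hc)
        obtain ⟨g, hg⟩ := Option.ne_none_iff_exists'.mp hnefy
        obtain ⟨z, hz1, hz2⟩ := C.A3 i j y w g hij hyF hg (Or.inr hystrict)
        rw [(C.F_none j w).1.mpr h3] at hz1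
        exact nomatch hz1
      rcases C.B3 j i true y w (Or.inl hij.symm) hyF with ⟨hce, hcp⟩ | ⟨hce, hcp⟩
      · -- CASE C1 : φ_{i+1}(y) = 0
        have hpjy : C.phi j y = 0 := by omega
        rcases C.B1 j y with ⟨dy1, dy2, dy3, dy4, dy5, dy6, dy7, dy8⟩ | ⟨ty1, ty2, ty3⟩
        · -- collapsed (i+1)-string at y forces wt_{i+1}(w) = 1
          have h0 : C.wt y ⟨(j : ℕ), hjn⟩ = 0 := dy8.mp hpjy
          rw [hfin_ji] at h0
          exact hqcon (by omega)
        · have hyPPj : C.phiP j y = 0 := by omega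
          have hyEPj : C.epsP j y = 1 := by omega
          have htne : C.E j true y ≠ none := by
            intro hc; have := (C.E_none j y).2.mp hc; omega
          obtain ⟨t, ht⟩ := Option.ne_none_iff_exists'.mp htne
          have htF : C.F j true t = some y := (C.inverse j true t y).mpr ht
          obtain ⟨htk1, htk2⟩ := C.K1len j true y t ht
          obtain ⟨htp1, htp2⟩ := C.FstepP j t y htF
          have hwtt := C.K1wt j true y t ht
          have hwtt_i1 : (C.wt t ⟨(i : ℕ) + 1, hi1⟩ : ℤ) = C.wt y ⟨(i : ℕ) + 1, hi1⟩ + 1 := by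
            have := hwtt ⟨(i : ℕ) + 1, hi1⟩
            rwa [if_pos (show (i : ℕ) + 1 = (j : ℕ) from hij)] at this
          have hwtt_j1 : (C.wt t ⟨(j : ℕ) + 1, hj1⟩ : ℤ) = C.wt y ⟨(j : ℕ) + 1, hj1⟩ - 1 := by
            have := hwtt ⟨(j : ℕ) + 1, hj1⟩
            rwa [if_neg (show ¬((j : ℕ) + 1 = (j : ℕ)) by omega),
              if_pos (show (j : ℕ) + 1 = (j : ℕ) + 1 from rfl)] at this
          by_cases hPit : C.phiP i t = 0
          · rcases C.B3 i j true t y (Or.inr hij.symm) htF with ⟨hB1, hB2⟩ | ⟨hB1, hB2⟩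
            · -- ε_i(t) = 0
              rcases C.B1 i t with ⟨e1, e2, e3, e4, e5, e6, e7, e8⟩ | ⟨f1, f2, f3⟩
              · have h0 : C.wt t ⟨(i : ℕ) + 1, hi1⟩ = 0 := e7.mp (by omega)
                omega
              · omega
            · -- ε_i(t) = 1 : t is again a "bad" vertex, recurse
              rcases C.B1 i t with ⟨e1, e2, e3, e4, e5, e6, e7, e8⟩ | ⟨f1, f2, f3⟩
              · omega
              · by_cases hstr_t : C.F j false t = some y
                · -- doubled edge: wt_{i+1}(w) = 1
                  obtain ⟨hg1, hg2⟩ := C.Fstep j t y hstr_t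
                  rcases C.B1 j t with ⟨g1, g2, g3, g4, g5, g6, g7, g8⟩ | ⟨k1, k2, k3⟩
                  · have h0 : C.wt t ⟨(j : ℕ) + 1, hj1⟩ = 0 := g7.mp (by omega)
                    exact hqcon (by omega)
                  · omega
                · obtain ⟨hss1, hss2⟩ := C.FsepP j t y htF hstr_t
                  have hallt := IH (C.eps j t) (by omega) t rfl (by omega) hPit
                    (by omega) (by omega)
                  have hnone := (hallt true).2.2.1
                  rw [hnone] at htF
                  exact nomatch htF
          · -- f_i'(t) exists: square with f_{i+1}' lands on w, impossible
            have hmne : C.F i true t ≠ none := by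
              intro hc; exact hPit ((C.F_none i t).2.mp hc)
            obtain ⟨m, hm⟩ := Option.ne_none_iff_exists'.mp hmne
            obtain ⟨z, hz1, hz2⟩ := C.A1 i j t m y hij hm htF
            rw [hyF] at hz2
            obtain rfl : w = z := Option.some.inj hz2
            have := (C.FstepP j m w hz1).1
            omega
      · -- CASE C2 : φ_{i+1}(y) = 1 : build the upward ladder
        have hpjy : C.phi j y = 1 := by omega
        rcases C.B1 j y with ⟨dy1, dy2, dy3, dy4, dy5, dy6, dy7, dy8⟩ | ⟨ty1, ty2, ty3⟩
        · omega
        have hyPPj : C.phiP j y = 1 := by omega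
        have hyEPj : C.epsP j y = 0 := by omega
        have chain : ∀ k, k ≤ C.eps j w + 1 → ∃ u m : C.B,
            C.F i true u = some m ∧
            C.eps j u + k = C.eps j w + 1 ∧
            C.phi j u = k + 1 ∧
            C.epsP j u = 0 ∧
            C.phiP j u = 1 ∧
            C.epsH j u + k = C.eps j w + 1 ∧
            C.phiH j u = k ∧
            C.wt u ⟨(i : ℕ), hi⟩ = C.wt w ⟨(i : ℕ), hi⟩ + 1 ∧
            C.wt u ⟨(i : ℕ) + 1, hi1⟩ + 1 = C.wt w ⟨(i : ℕ) + 1, hi1⟩ + k ∧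
            C.eps i u ≤ k ∧
            C.epsP i u = 0 ∧
            C.eps j m + k = C.eps j w ∧
            (k = 0 → C.epsH i u = 0) := by
          intro k
          induction k with
          | zero =>
            intro _
            exact ⟨y, w, hyF, by omega, by omega, hyEPj, hyPPj, by omega, hyPhiHj,
              by omega, by omega, by omega, by omega, by omega, fun _ => by omega⟩
          | succ k ihk =>
            intro hk
            obtain ⟨u, m, hum, q1, q2, q3, q4, q5, q6, q7, q8, q9, q10, q11, q12⟩ :=
              ihk (by omega)
            have hEune : C.E j false u ≠ none := by
              intro hc; have := (C.E_none j u).1.mp hc; omega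
            obtain ⟨u', hu'⟩ := Option.ne_none_iff_exists'.mp hEune
            have hFu' : C.F j false u' = some u := (C.inverse j false u' u).mpr hu'
            have hstr : C.F j true u' ≠ some u := by
              intro hc
              have := (C.FstepP j u' u hc).1
              omega
            obtain ⟨hsp1, hsp2⟩ := C.Fsep j u' u hFu' hstr
            obtain ⟨hsf1, hsf2⟩ := C.Fstep j u' u hFu'
            obtain ⟨hkl1, hkl2⟩ := C.K1len j false u u' hu'
            have hwtu := C.K1wt j false u u' hu'
            have hwtu_i : (C.wt u' ⟨(i : ℕ), hi⟩ : ℤ) = C.wt u ⟨(i : ℕ), hi⟩ := by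
              have := hwtu ⟨(i : ℕ), hi⟩
              rwa [if_neg (show ¬((i : ℕ) = (j : ℕ)) by omega),
                if_neg (show ¬((i : ℕ) = (j : ℕ) + 1) by omega), add_zero] at this
            have hwtu_i1 : (C.wt u' ⟨(i : ℕ) + 1, hi1⟩ : ℤ) =
                C.wt u ⟨(i : ℕ) + 1, hi1⟩ + 1 := by
              have := hwtu ⟨(i : ℕ) + 1, hi1⟩
              rwa [if_pos (show (i : ℕ) + 1 = (j : ℕ) from hij)] at this
            have hB3u := C.B3 i j false u' u (Or.inr hij.symm) hFu'
            have heiu' : C.eps i u' ≤ k + 1 := by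
              rcases hB3u with ⟨hB, -⟩ | ⟨hB, -⟩ <;> omega
            rcases C.B1 i u' with ⟨e1, e2, e3, e4, e5, e6, e7, e8⟩ | ⟨f1, f2, f3⟩
            · -- collapsed i-string through u' : forces wt_{i+1}(w) = 1
              exfalso
              have hphipos : 1 ≤ C.phi i u' := by
                by_contra hcon
                have h0 : C.wt u' ⟨(i : ℕ), hi⟩ = 0 := e8.mp (by omega)
                omega
              have hwcol := C.colwt i hi1 (C.eps i u') u' e2 e3 e4 e5 e6 e7 rfl hphipos
              exact hqcon (by omega)
            · by_cases hPiu' : C.phiP i u' = 0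
              · -- the ladder stops: kill with (A3) and (A2)
                exfalso
                have hEPiu' : C.epsP i u' = 1 := by omega
                have hnne : C.E i true u' ≠ none := by
                  intro hc; have := (C.E_none i u').2.mp hc; omega
                obtain ⟨nn, hnn⟩ := Option.ne_none_iff_exists'.mp hnne
                have hnF : C.F i true nn = some u' := (C.inverse i true nn u').mpr hnn
                obtain ⟨hnk1, hnk2⟩ := C.K1len i true u' nn hnn
                obtain ⟨hnp1, hnp2⟩ := C.FstepP i nn u' hnF
                have hpHjn : C.phiH j nn = 0 := by
                  by_contra hph
                  have hnef : C.F j false nn ≠ none := by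
                    intro hc; exact hph ((C.F_none j nn).1.mp hc)
                  obtain ⟨κ, hκ⟩ := Option.ne_none_iff_exists'.mp hnef
                  have hside : C.F i false nn ≠ some u' := by
                    intro hcon
                    obtain ⟨hr1, hr2⟩ := C.Fstep i nn u' hcon
                    rcases C.B1 i nn with ⟨g1', g2', g3', g4', g5', g6', g7', g8'⟩ |
                      ⟨k1', k2', k3'⟩
                    · omega
                    · omega
                  obtain ⟨z, hz1, hz2⟩ := C.A3 i j nn u' κ hij hnF hκ (Or.inr hside)
                  rw [hFu'] at hz1
                  obtain rfl : u = z := Option.some.inj hz1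
                  have hEiu : C.E i true u = some κ := (C.inverse i true κ u).mp hz2
                  have hnone : C.E i true u = none := (C.E_none i u).2.mpr q10
                  rw [hnone] at hEiu
                  exact nomatch hEiu
                have hpjn_le : C.phi j nn ≤ 1 := by
                  rcases C.B1 j nn with ⟨g1', g2', g3', g4', g5', g6', g7', g8'⟩ |
                    ⟨k1', k2', k3'⟩
                  · omega
                  · omega
                rcases C.B3 j i true nn u' (Or.inl hij.symm) hnF with ⟨hbb1, hbb2⟩ |
                  ⟨hbb1, hbb2⟩
                · have hk0 : k = 0 := by omega
                  have hHiu : C.epsH i u = 0 := q12 hk0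
                  have hPjn : C.phiP j nn = 1 := by
                    rcases C.B1 j nn with ⟨g1', g2', g3', g4', g5', g6', g7', g8'⟩ |
                      ⟨k1', k2', k3'⟩
                    · omega
                    · omega
                  have hνne : C.F j true nn ≠ none := by
                    intro hc; have := (C.F_none j nn).2.mp hc; omega
                  obtain ⟨ν, hν⟩ := Option.ne_none_iff_exists'.mp hνne
                  have heinn : C.eps i nn = 0 := by omega
                  have heiν : C.eps i ν = C.eps i nn := by
                    rcases C.B3 i j true nn ν (Or.inr hij.symm) hν with ⟨hBB, -⟩ | ⟨hBB, -⟩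
                    · omega
                    · omega
                  obtain ⟨⟨z, hz1, hz2⟩, -⟩ := (C.A2 i j nn u' ν hij hnF hν).mpr
                    ⟨by omega, by omega, by omega, hpHjn⟩
                  rw [hFu'] at hz1
                  obtain rfl : u = z := Option.some.inj hz1
                  obtain ⟨hw1, hw2⟩ := C.Fstep i ν u hz2
                  omega
                · omega
              · -- the ladder continues: cross with (A3)
                have hPiu1 : C.phiP i u' = 1 := by omega
                have hEPiu : C.epsP i u' = 0 := by omega
                have hmne : C.F i true u' ≠ none := by
                  intro hc; have := (C.F_none i u').2.mp hc; omega
                obtain ⟨m', hm'⟩ := Option.ne_none_iff_exists'.mp hmne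
                obtain ⟨z, hz1, hz2⟩ := C.A3 i j u' m' u hij hm' hFu' (Or.inl hstr)
                rw [hum] at hz2
                obtain rfl : m = z := Option.some.inj hz2
                obtain ⟨hr1, hr2⟩ := C.K1len j false m m' ((C.inverse j false m' m).mp hz1)
                exact ⟨u', m', hm', by omega, by omega, by omega, by omega, by omega,
                  by omega, by omega, by omega, heiu', hEPiu, by omega,
                  fun hc => absurd hc (by omega)⟩
        obtain ⟨u, m, -, -, -, -, -, -, -, -, -, -, -, hfin, -⟩ :=
          chain (C.eps j w + 1) le_rfl
        omega
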